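/- Let q, p : ℝ → ℝ³ be smooth curves with p(t) · q(t) = 1 and p'(t) = q(t) × q'(t) for all t, and suppose I := det(q, q', q'') and Ī := det(p, p', p'') are nowhere zero. Setting J := det(q', q'', q''') and J̄ := det(p', p'', p'''), one has I² + J = 0 and Ī² − J̄ = 0 identically. -/

import Mathlib

/-!
Differentiating `p ⬝ᵥ q = 1` three times, using `p' = q × q'`, gives `p ⬝ᵥ q' = p ⬝ᵥ q'' = 0` and
`p ⬝ᵥ q''' = -I`. Together with `p ⬝ᵥ q = 1` the first two force `q' × q'' = I • p`, whence
`J = (q' × q'') ⬝ᵥ q''' = -I²`. Dually `p'' = q × q''`, so `p' × p'' = (q × q') × (q × q'') = I • q`,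
which gives `Ī = I` and `J̄ = I • q ⬝ᵥ (q' × q'' + q × q''') = I²`.
-/

open Matrix

/-- Scalar triple product on ℝ³. -/
def det3 (u v w : Fin 3 → ℝ) : ℝ := u ⬝ᵥ (v ⨯₃ w)

section Calculus

variable {𝕜 : Type*} [NontriviallyNormedField 𝕜] [CompleteSpace 𝕜] {x : 𝕜}

theorem HasDerivAt.dotProduct {m : Type*} [Fintype m] {u v : 𝕜 → m → 𝕜} {u' v' : m → 𝕜}
    (hu : HasDerivAt u u' x) (hv : HasDerivAt v v' x) :
    HasDerivAt (fun y ↦ u y ⬝ᵥ v y) (u' ⬝ᵥ v x + u x ⬝ᵥ v') x := by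
  simpa [add_comm] using (dotProductBilin 𝕜 𝕜 : (m → 𝕜) →ₗ[𝕜] _ →ₗ[𝕜] 𝕜)
    |>.toContinuousBilinearMap.hasDerivAt_of_bilinear (fun _ ↦ hu) (fun _ ↦ hv)

theorem HasDerivAt.crossProduct {u v : 𝕜 → Fin 3 → 𝕜} {u' v' : Fin 3 → 𝕜}
    (hu : HasDerivAt u u' x) (hv : HasDerivAt v v' x) :
    HasDerivAt (fun y ↦ u y ⨯₃ v y) (u' ⨯₃ v x + u x ⨯₃ v') x := by
  simpa [add_comm] using (_root_.crossProduct (R := 𝕜))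
    |>.toContinuousBilinearMap.hasDerivAt_of_bilinear (fun _ ↦ hu) (fun _ ↦ hv)

theorem deriv_crossProduct {u v : 𝕜 → Fin 3 → 𝕜} (hu : DifferentiableAt 𝕜 u x)
    (hv : DifferentiableAt 𝕜 v x) :
    deriv (fun y ↦ u y ⨯₃ v y) x = deriv u x ⨯₃ v x + u x ⨯₃ deriv v x :=
  (hu.hasDerivAt.crossProduct hv.hasDerivAt).deriv

theorem dotProduct_deriv_eq_neg_of_dotProduct_eq_const {m : Type*} [Fintype m]
    {u v : 𝕜 → m → 𝕜} {c : 𝕜} (hu : Differentiable 𝕜 u) (hv : Differentiable 𝕜 v)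
    (huv : ∀ y, u y ⬝ᵥ v y = c) (x : 𝕜) :
    u x ⬝ᵥ deriv v x = -(deriv u x ⬝ᵥ v x) := by
  have h := (hu x).hasDerivAt.dotProduct (hv x).hasDerivAt
  simp only [huv] at h
  rw [eq_neg_iff_add_eq_zero, add_comm, h.unique (hasDerivAt_const x c)]

end Calculus

section TripleProduct

variable {R : Type*} [CommRing R]

theorem triple_product_smul (u v w d : Fin 3 → R) :
    (u ⬝ᵥ v ⨯₃ w) • d = (d ⬝ᵥ u) • (v ⨯₃ w) + (d ⬝ᵥ v) • (w ⨯₃ u) + (d ⬝ᵥ w) • (u ⨯₃ v) := by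
  simp_rw [cross_apply, vec3_dotProduct]
  ext i
  fin_cases i <;>
  · simp only [Fin.isValue, Fin.reduceFinMk, cons_val, Pi.add_apply, Pi.smul_apply, smul_eq_mul]
    ring

theorem cross_cross_cross_left (u v w : Fin 3 → R) :
    (u ⨯₃ v) ⨯₃ (u ⨯₃ w) = (u ⬝ᵥ v ⨯₃ w) • u := by
  rw [cross_cross_eq_smul_sub_smul, dot_self_cross, zero_smul, zero_sub,
    triple_product_permutation, ← neg_smul, ← dotProduct_neg, cross_anticomm]

theorem triple_product_eq_cross_dotProduct (u v w : Fin 3 → R) : u ⬝ᵥ v ⨯₃ w = u ⨯₃ v ⬝ᵥ w := by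
  rw [triple_product_permutation, triple_product_permutation, dotProduct_comm]

end TripleProduct

structure IsCartanEngelCurve {𝕜 : Type*} [NontriviallyNormedField 𝕜] (q p : 𝕜 → Fin 3 → 𝕜) :
    Prop where
  dotProduct_eq_one : ∀ t, p t ⬝ᵥ q t = 1
  deriv_eq_cross : ∀ t, deriv p t = q t ⨯₃ deriv q t

namespace IsCartanEngelCurve

variable {𝕜 : Type*} [NontriviallyNormedField 𝕜] [CompleteSpace 𝕜] {q p : 𝕜 → Fin 3 → 𝕜}

theorem dotProduct_deriv (h : IsCartanEngelCurve q p) (hq : ContDiff 𝕜 3 q)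
    (hp : Differentiable 𝕜 p) (t : 𝕜) : p t ⬝ᵥ deriv q t = 0 := by
  rw [dotProduct_deriv_eq_neg_of_dotProduct_eq_const hp (hq.differentiable (by norm_num))
    h.dotProduct_eq_one, h.deriv_eq_cross, dotProduct_comm, dot_self_cross, neg_zero]

theorem dotProduct_deriv_deriv (h : IsCartanEngelCurve q p) (hq : ContDiff 𝕜 3 q)
    (hp : Differentiable 𝕜 p) (t : 𝕜) : p t ⬝ᵥ deriv (deriv q) t = 0 := by
  rw [dotProduct_deriv_eq_neg_of_dotProduct_eq_const hp
    (hq.of_le (by norm_num)).differentiable_deriv_two (h.dotProduct_deriv hq hp),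
    h.deriv_eq_cross, dotProduct_comm, dot_cross_self, neg_zero]

theorem dotProduct_deriv_deriv_deriv (h : IsCartanEngelCurve q p) (hq : ContDiff 𝕜 3 q)
    (hp : Differentiable 𝕜 p) (t : 𝕜) :
    p t ⬝ᵥ deriv (deriv (deriv q)) t = -(q t ⬝ᵥ deriv q t ⨯₃ deriv (deriv q) t) := by
  rw [dotProduct_deriv_eq_neg_of_dotProduct_eq_const hp
    (hq.deriv' (n := 2)).differentiable_deriv_two (h.dotProduct_deriv_deriv hq hp),
    h.deriv_eq_cross, dotProduct_comm, triple_product_permutation]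

theorem deriv_cross_deriv_deriv (h : IsCartanEngelCurve q p) (hq : ContDiff 𝕜 3 q)
    (hp : Differentiable 𝕜 p) (t : 𝕜) :
    deriv q t ⨯₃ deriv (deriv q) t = (q t ⬝ᵥ deriv q t ⨯₃ deriv (deriv q) t) • p t := by
  rw [triple_product_smul, h.dotProduct_eq_one, h.dotProduct_deriv hq hp,
    h.dotProduct_deriv_deriv hq hp]
  simp

theorem dual_deriv_deriv (h : IsCartanEngelCurve q p) (hq : ContDiff 𝕜 3 q) (t : 𝕜) :
    deriv (deriv p) t = q t ⨯₃ deriv (deriv q) t := by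
  rw [funext h.deriv_eq_cross, deriv_crossProduct (hq.differentiable (by norm_num) t)
    ((hq.of_le (by norm_num)).differentiable_deriv_two t), cross_self, zero_add]

theorem dual_deriv_deriv_deriv (h : IsCartanEngelCurve q p) (hq : ContDiff 𝕜 3 q) (t : 𝕜) :
    deriv (deriv (deriv p)) t
      = deriv q t ⨯₃ deriv (deriv q) t + q t ⨯₃ deriv (deriv (deriv q)) t := by
  rw [funext (h.dual_deriv_deriv hq), deriv_crossProduct (hq.differentiable (by norm_num) t)
    ((hq.deriv' (n := 2)).differentiable_deriv_two t)]

theorem triple_product_sq_add_deriv_triple_product (h : IsCartanEngelCurve q p)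
    (hq : ContDiff 𝕜 3 q) (hp : Differentiable 𝕜 p) (t : 𝕜) :
    (q t ⬝ᵥ deriv q t ⨯₃ deriv (deriv q) t) ^ 2
      + deriv q t ⬝ᵥ deriv (deriv q) t ⨯₃ deriv (deriv (deriv q)) t = 0 := by
  rw [triple_product_eq_cross_dotProduct (deriv q t)]
  nth_rw 2 [h.deriv_cross_deriv_deriv hq hp]
  rw [smul_dotProduct, h.dotProduct_deriv_deriv_deriv hq hp, smul_eq_mul]
  ring

theorem dual_deriv_cross_deriv_deriv (h : IsCartanEngelCurve q p) (hq : ContDiff 𝕜 3 q)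
    (t : 𝕜) :
    deriv p t ⨯₃ deriv (deriv p) t = (q t ⬝ᵥ deriv q t ⨯₃ deriv (deriv q) t) • q t := by
  rw [h.deriv_eq_cross, h.dual_deriv_deriv hq, cross_cross_cross_left]

theorem dual_triple_product (h : IsCartanEngelCurve q p) (hq : ContDiff 𝕜 3 q) (t : 𝕜) :
    p t ⬝ᵥ deriv p t ⨯₃ deriv (deriv p) t = q t ⬝ᵥ deriv q t ⨯₃ deriv (deriv q) t := by
  rw [h.dual_deriv_cross_deriv_deriv hq, dotProduct_smul, h.dotProduct_eq_one, smul_eq_mul,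
    mul_one]

theorem dual_deriv_triple_product (h : IsCartanEngelCurve q p) (hq : ContDiff 𝕜 3 q) (t : 𝕜) :
    deriv p t ⬝ᵥ deriv (deriv p) t ⨯₃ deriv (deriv (deriv p)) t
      = (q t ⬝ᵥ deriv q t ⨯₃ deriv (deriv q) t) ^ 2 := by
  rw [triple_product_eq_cross_dotProduct, h.dual_deriv_cross_deriv_deriv hq,
    h.dual_deriv_deriv_deriv hq, smul_dotProduct, dotProduct_add, dot_self_cross, add_zero,
    smul_eq_mul, sq]

end IsCartanEngelCurve

theorem centroaffine_torsion_identity_general (q p : ℝ → Fin 3 → ℝ)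
    (hq : ContDiff ℝ (⊤ : ℕ∞) q) (hp : ContDiff ℝ (⊤ : ℕ∞) p)
    (hpq : ∀ t, p t ⬝ᵥ q t = 1)
    (hode : ∀ t, deriv p t = q t ⨯₃ deriv q t) :
    ∀ t, (det3 (q t) (deriv q t) (deriv (deriv q) t)) ^ 2
        + det3 (deriv q t) (deriv (deriv q) t) (deriv (deriv (deriv q)) t) = 0 ∧
      (det3 (p t) (deriv p t) (deriv (deriv p) t)) ^ 2
        - det3 (deriv p t) (deriv (deriv p) t) (deriv (deriv (deriv p)) t) = 0 := by
  have h : IsCartanEngelCurve q p := ⟨hpq, hode⟩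
  have hq3 : ContDiff ℝ 3 q := hq.of_le (WithTop.coe_le_coe.mpr le_top)
  intro t
  refine ⟨h.triple_product_sq_add_deriv_triple_product hq3 (hp.differentiable (by simp)) t, ?_⟩
  rw [det3, det3, h.dual_triple_product hq3, h.dual_deriv_triple_product hq3, sub_self]

/-- Along integral curves of the Cartan–Engel system `p ⬝ᵥ q = 1`, `p' = q × q'`:
`I² + J = 0` and `Ī² − J̄ = 0` (constant centro-affine torsion −1). -/
theorem centroaffine_torsion_identity (q p : ℝ → Fin 3 → ℝ)
    (hq : ContDiff ℝ (⊤ : ℕ∞) q) (hp : ContDiff ℝ (⊤ : ℕ∞) p)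
    (hpq : ∀ t, p t ⬝ᵥ q t = 1)
    (hode : ∀ t, deriv p t = q t ⨯₃ deriv q t)
    (hI : ∀ t, det3 (q t) (deriv q t) (deriv (deriv q) t) ≠ 0)
    (hIbar : ∀ t, det3 (p t) (deriv p t) (deriv (deriv p) t) ≠ 0) :
    ∀ t, (det3 (q t) (deriv q t) (deriv (deriv q) t)) ^ 2
        + det3 (deriv q t) (deriv (deriv q) t) (deriv (deriv (deriv q)) t) = 0 ∧
      (det3 (p t) (deriv p t) (deriv (deriv p) t)) ^ 2
        - det3 (deriv p t) (deriv (deriv p) t) (deriv (deriv (deriv p)) t) = 0 :=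
  centroaffine_torsion_identity_general q p hq hp hpq hode
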